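/- Let W̃₁, W̃₂ be spherical Wulff shapes relative to the same point N ∈ Sⁿ⁺¹, with spherical duals DW̃ᵢ = W̃ᵢ°. Then (DW̃₁ ∩ DW̃₂)° = s-conv(W̃₁ ∪ W̃₂). -/

import Mathlib

/-!
Since `W₁° ∩ W₂° = (W₁ ∪ W₂)°`, the claim is the bipolar identity `S°° = s-conv S` for
`S = W₁ ∪ W₂`. This `S` is compact and lies in the open hemisphere centred at `N`, so its convex
hull is compact and misses the origin; hence `[0, ∞) • conv S` is a closed convex cone, and
Farkas' lemma identifies it with the double inner dual of `S`. Cutting a cone down to the unit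
sphere does not change its inner dual, so `S°°` is the trace of that cone on the sphere, i.e. the
normalised convex combinations of points of `S`.
-/

open RealInnerProductSpace

/-- The unit sphere `Sⁿ⁺¹` in `ℝⁿ⁺²`. -/
def sph (n : ℕ) : Set (EuclideanSpace ℝ (Fin (n + 2))) :=
  Metric.sphere (0 : EuclideanSpace ℝ (Fin (n + 2))) 1

/-- The closed hemisphere centered at `P`. -/
def hemi (n : ℕ) (P : EuclideanSpace ℝ (Fin (n + 2))) :
    Set (EuclideanSpace ℝ (Fin (n + 2))) :=
  {Q ∈ sph n | 0 ≤ ⟪P, Q⟫}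

/-- The spherical polar set `W° = ⋂_{P ∈ W} H(P)`. -/
def spolar (n : ℕ) (W : Set (EuclideanSpace ℝ (Fin (n + 2)))) :
    Set (EuclideanSpace ℝ (Fin (n + 2))) :=
  {Q ∈ sph n | ∀ P ∈ W, 0 ≤ ⟪P, Q⟫}

/-- `W` is hemispherical: disjoint from some closed hemisphere. -/
def Hemispherical (n : ℕ) (W : Set (EuclideanSpace ℝ (Fin (n + 2)))) : Prop :=
  ∃ Q ∈ sph n, W ∩ hemi n Q = ∅

/-- The spherical convex hull: normalized nonnegative convex combinations of points of `W`. -/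
def sconv (n : ℕ) (W : Set (EuclideanSpace ℝ (Fin (n + 2)))) :
    Set (EuclideanSpace ℝ (Fin (n + 2))) :=
  {x | ∃ (k : ℕ) (t : Fin k → ℝ) (P : Fin k → EuclideanSpace ℝ (Fin (n + 2))),
    (∀ i, P i ∈ W) ∧ (∀ i, 0 ≤ t i) ∧ (∑ i, t i) = 1 ∧
    x = ‖∑ i, t i • P i‖⁻¹ • ∑ i, t i • P i}

/-- A set is spherical convex if it contains the geodesic arc between any two of its points. -/
def SphericalConvex (n : ℕ) (C : Set (EuclideanSpace ℝ (Fin (n + 2)))) : Prop :=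
  ∀ P ∈ C, ∀ Q ∈ C, ∀ t ∈ Set.Icc (0 : ℝ) 1,
    ‖(1 - t) • P + t • Q‖⁻¹ • ((1 - t) • P + t • Q) ∈ C

/-- A spherical Wulff shape relative to `N`: a closed spherical convex body disjoint from
`H(-N)` and having `N` as an interior point (in the sphere). -/
def IsSphericalWulffShape (n : ℕ) (N : EuclideanSpace ℝ (Fin (n + 2)))
    (W : Set (EuclideanSpace ℝ (Fin (n + 2)))) : Prop :=
  W ⊆ sph n ∧ IsClosed W ∧ SphericalConvex n W ∧
    W ∩ hemi n (-N) = ∅ ∧ ∃ ε > (0 : ℝ), sph n ∩ Metric.ball N ε ⊆ W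

open Pointwise Set Filter Topology ProperCone

section ConeHull

variable {E : Type*} [NormedAddCommGroup E] [NormedSpace ℝ E]

/-- Carathéodory's theorem. -/
theorem convexHull_eq_image_stdSimplex_prod_pi [FiniteDimensional ℝ E] {s : Set E}
    (hs : s.Nonempty) :
    convexHull ℝ s =
      (fun p : (Fin (Module.finrank ℝ E + 1) → ℝ) × (Fin (Module.finrank ℝ E + 1) → E) =>
        ∑ i, p.1 i • p.2 i) '' (stdSimplex ℝ _ ×ˢ univ.pi fun _ => s) := by
  obtain ⟨s₀, hs₀⟩ := hs
  set d := Module.finrank ℝ E + 1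
  refine Subset.antisymm (fun x hx => ?_) ?_
  · obtain ⟨ι, _, z, w, hzs, hind, hw, hw1, rfl⟩ := eq_pos_convex_span_of_mem_convexHull hx
    have hcard : Fintype.card ι ≤ d :=
      hind.card_le_finrank_succ.trans (Nat.succ_le_succ (Submodule.finrank_le _))
    let e : ι ⊕ Fin (d - Fintype.card ι) ≃ Fin d :=
      (Equiv.sumCongr (Fintype.equivFin ι) (Equiv.refl _)).trans
        (finSumFinEquiv.trans (finCongr (by omega)))
    refine ⟨(Sum.elim w 0 ∘ e.symm, Sum.elim z (fun _ => s₀) ∘ e.symm), ⟨⟨fun j => ?_, ?_⟩,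
      fun j _ => ?_⟩, ?_⟩
    · show 0 ≤ Sum.elim w 0 (e.symm j)
      cases e.symm j with
      | inl i => exact (hw i).le
      | inr _ => exact le_rfl
    · simp [Equiv.sum_comp e.symm (Sum.elim w 0), hw1]
    · show Sum.elim z (fun _ => s₀) (e.symm j) ∈ s
      cases e.symm j with
      | inl i => exact hzs (mem_range_self i)
      | inr _ => exact hs₀
    · simp [Equiv.sum_comp e.symm (fun k => Sum.elim w 0 k • Sum.elim z (fun _ => s₀) k)]
  · rintro _ ⟨⟨w, z⟩, ⟨⟨hw, hw1⟩, hz⟩, rfl⟩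
    exact mem_convexHull_of_exists_fintype w z hw hw1 (fun i => hz i (mem_univ i)) rfl

theorem IsCompact.convexHull [FiniteDimensional ℝ E] {s : Set E} (hs : IsCompact s) :
    IsCompact (convexHull ℝ s) := by
  rcases s.eq_empty_or_nonempty with rfl | hne
  · simp
  rw [convexHull_eq_image_stdSimplex_prod_pi hne]
  exact ((isCompact_stdSimplex ℝ _).prod (isCompact_univ_pi fun _ => hs)).image (by fun_prop)

theorem IsCompact.isClosed_Ici_smul {C : Set E} (hC : IsCompact C) (h0 : (0 : E) ∉ C) :
    IsClosed (Ici (0 : ℝ) • C) := by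
  refine isSeqClosed_iff_isClosed.mp fun {x z} hx hxz => ?_
  choose c hc y hy hcy using fun k => mem_smul.mp (hx k)
  obtain ⟨y₀, hy₀, φ, hφ, hyφ⟩ := hC.tendsto_subseq hy
  have hnorm : ∀ y ∈ C, ‖y‖ ≠ 0 := fun y hy => norm_ne_zero_iff.mpr (ne_of_mem_of_not_mem hy h0)
  have hc_eq : c = fun k => ‖x k‖ / ‖y k‖ := funext fun k => by
    rw [← hcy k, norm_smul, Real.norm_of_nonneg (hc k), mul_div_cancel_right₀ _ (hnorm _ (hy k))]
  have hxφ : Tendsto (x ∘ φ) atTop (𝓝 z) := hxz.comp hφ.tendsto_atTop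
  have hcφ : Tendsto (c ∘ φ) atTop (𝓝 (‖z‖ / ‖y₀‖)) := by
    rw [hc_eq]
    exact hxφ.norm.div hyφ.norm (hnorm _ hy₀)
  refine ⟨‖z‖ / ‖y₀‖, div_nonneg (norm_nonneg _) (norm_nonneg _), y₀, hy₀,
    tendsto_nhds_unique (hcφ.smul hyφ) ?_⟩
  simpa only [Function.comp_def, hcy] using hxφ

def Convex.pointedCone {C : Set E} (hC : Convex ℝ C) (hne : C.Nonempty) : PointedCone ℝ E where
  carrier := Ici (0 : ℝ) • C
  zero_mem' := hne.elim fun y hy => ⟨0, self_mem_Ici, y, hy, zero_smul ℝ y⟩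
  add_mem' := by
    rintro _ _ ⟨a, (ha : 0 ≤ a), x, hx, rfl⟩ ⟨b, (hb : 0 ≤ b), y, hy, rfl⟩
    rcases (add_nonneg ha hb).eq_or_lt with hab | hab
    · obtain ⟨rfl, rfl⟩ : a = 0 ∧ b = 0 := (add_eq_zero_iff_of_nonneg ha hb).mp hab.symm
      exact ⟨0, self_mem_Ici, x, hx, by simp⟩
    · refine ⟨a + b, hab.le, (a / (a + b)) • x + (b / (a + b)) • y,
        hC hx hy (by positivity) (by positivity) (by field_simp), ?_⟩
      simp only [smul_add, smul_smul, mul_div_cancel₀ _ hab.ne']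
  smul_mem' := by
    rintro c _ ⟨a, (ha : 0 ≤ a), x, hx, rfl⟩
    exact ⟨c * a, mul_nonneg c.2 ha, x, hx, mul_smul (c : ℝ) a x⟩

theorem sphere_inter_Ici_smul {C : Set E} (h0 : (0 : E) ∉ C) :
    Metric.sphere (0 : E) 1 ∩ Ici (0 : ℝ) • C = (fun y => ‖y‖⁻¹ • y) '' C := by
  ext x
  constructor
  · rintro ⟨hx, c, hc, y, hy, rfl⟩
    have : c * ‖y‖ = 1 := by
      rwa [mem_sphere_zero_iff_norm, norm_smul, Real.norm_of_nonneg hc] at hx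
    exact ⟨y, hy, by rw [eq_inv_of_mul_eq_one_left this]⟩
  · rintro ⟨y, hy, rfl⟩
    have hy0 : y ≠ 0 := ne_of_mem_of_not_mem hy h0
    exact ⟨mem_sphere_zero_iff_norm.mpr (norm_smul_inv_norm hy0),
      smul_mem_smul (inv_nonneg.mpr (norm_nonneg y)) hy⟩

end ConeHull

section InnerDual

variable {E : Type*} [NormedAddCommGroup E] [InnerProductSpace ℝ E]

theorem zero_notMem_convexHull_of_inner_pos {N : E} {S : Set E} (hS : ∀ P ∈ S, 0 < ⟪N, P⟫) :
    (0 : E) ∉ convexHull ℝ S := fun h0 => by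
  have : (0 : E) ∈ {x | 0 < ⟪N, x⟫} :=
    convexHull_min hS (convex_halfSpace_gt (innerₗ E N).isLinear 0) h0
  simp at this

variable [CompleteSpace E]

theorem innerDual_sphere_inter (C : ProperCone ℝ E) :
    innerDual (Metric.sphere (0 : E) 1 ∩ C) = innerDual (C : Set E) := by
  refine le_antisymm (fun v hv x hx => ?_) (innerDual_le_innerDual inter_subset_right)
  rcases eq_or_ne x 0 with rfl | hx0
  · simp
  have hxn : 0 < ‖x‖ := norm_pos_iff.mpr hx0
  have := hv ⟨mem_sphere_zero_iff_norm.mpr (norm_smul_inv_norm hx0),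
    PointedCone.smul_mem C.toSubmodule (inv_nonneg.mpr hxn.le) hx⟩
  rw [innerₗ_apply_apply, real_inner_smul_left] at this
  exact nonneg_of_mul_nonneg_right this (inv_pos.mpr hxn)

theorem innerDual_convexHull (S : Set E) :
    innerDual (convexHull ℝ S) = innerDual S := by
  refine le_antisymm (innerDual_le_innerDual (subset_convexHull ℝ S)) fun v hv x hx => ?_
  exact convexHull_min (fun y hy => hv hy) (convex_halfSpace_ge ((innerₗ E).flip v).isLinear 0) hx

theorem innerDual_innerDual_eq_Ici_smul_convexHull [FiniteDimensional ℝ E] {S : Set E}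
    (hS : IsCompact S) (hne : S.Nonempty) (h0 : (0 : E) ∉ convexHull ℝ S) :
    (innerDual (innerDual S : Set E) : Set E) = Ici (0 : ℝ) • convexHull ℝ S := by
  let K : ProperCone ℝ E :=
    ⟨(convex_convexHull ℝ S).pointedCone hne.convexHull,
      hS.convexHull.isClosed_Ici_smul h0⟩
  have hK : innerDual (K : Set E) = innerDual S := by
    refine le_antisymm (innerDual_le_innerDual fun y hy => ⟨1, zero_le_one' ℝ, y,
      subset_convexHull ℝ S hy, one_smul ℝ y⟩) fun v hv => ?_
    rintro _ ⟨c, hc, y, hy, rfl⟩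
    show 0 ≤ ⟪c • y, v⟫
    rw [real_inner_smul_left]
    exact mul_nonneg hc ((innerDual_convexHull S ▸ hv) hy)
  rw [← hK, innerDual_innerDual]
  rfl

end InnerDual

section Spherical

variable {n : ℕ}

theorem spolar_eq_sphere_inter_innerDual (W : Set (EuclideanSpace ℝ (Fin (n + 2)))) :
    spolar n W = Metric.sphere 0 1 ∩ innerDual W :=
  rfl

theorem spolar_inter_spolar (W₁ W₂ : Set (EuclideanSpace ℝ (Fin (n + 2)))) :
    spolar n W₁ ∩ spolar n W₂ = spolar n (W₁ ∪ W₂) := by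
  rw [spolar_eq_sphere_inter_innerDual, spolar_eq_sphere_inter_innerDual,
    spolar_eq_sphere_inter_innerDual, innerDual_union, ← inter_inter_distrib_left]
  rfl

theorem sconv_eq_image_convexHull (W : Set (EuclideanSpace ℝ (Fin (n + 2)))) :
    sconv n W = (fun y => ‖y‖⁻¹ • y) '' convexHull ℝ W := by
  ext x
  constructor
  · rintro ⟨k, t, P, hP, ht, ht1, rfl⟩
    exact ⟨_, mem_convexHull_of_exists_fintype t P ht ht1 hP rfl, rfl⟩
  · rintro ⟨_, hy, rfl⟩
    obtain ⟨ι, _, w, z, hw, hw1, hz, rfl⟩ := mem_convexHull_iff_exists_fintype.mp hy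
    let e := (Fintype.equivFin ι).symm
    refine ⟨Fintype.card ι, w ∘ e, z ∘ e, fun i => hz _, fun i => hw _, ?_, ?_⟩
    · rwa [Function.comp_def, Equiv.sum_comp e w]
    · simp only [Function.comp_apply, Equiv.sum_comp e fun i => w i • z i]

theorem spolar_spolar_eq_sconv {S : Set (EuclideanSpace ℝ (Fin (n + 2)))} (hS : IsCompact S)
    (hne : S.Nonempty) (h0 : 0 ∉ convexHull ℝ S) : spolar n (spolar n S) = sconv n S := by
  rw [spolar_eq_sphere_inter_innerDual, spolar_eq_sphere_inter_innerDual,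
    innerDual_sphere_inter, innerDual_innerDual_eq_Ici_smul_convexHull hS hne h0,
    sphere_inter_Ici_smul h0, sconv_eq_image_convexHull]

end Spherical

namespace IsSphericalWulffShape

variable {n : ℕ} {N : EuclideanSpace ℝ (Fin (n + 2))} {W : Set (EuclideanSpace ℝ (Fin (n + 2)))}

theorem isCompact (h : IsSphericalWulffShape n N W) : IsCompact W :=
  (isCompact_sphere 0 1).of_isClosed_subset h.2.1 h.1

theorem inner_pos (h : IsSphericalWulffShape n N W) {P : EuclideanSpace ℝ (Fin (n + 2))}
    (hP : P ∈ W) : 0 < ⟪N, P⟫ := by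
  by_contra! hle
  have hP' : P ∈ hemi n (-N) := ⟨h.1 hP, by rw [inner_neg_left]; linarith⟩
  exact eq_empty_iff_forall_notMem.mp h.2.2.2.1 P ⟨hP, hP'⟩

theorem center_mem (h : IsSphericalWulffShape n N W) (hN : N ∈ sph n) : N ∈ W :=
  let ⟨_, hε, hball⟩ := h.2.2.2.2
  hball ⟨hN, Metric.mem_ball_self hε⟩

end IsSphericalWulffShape

theorem spolar_inter_duals (n : ℕ) (N : EuclideanSpace ℝ (Fin (n + 2))) (hN : N ∈ sph n)
    (W₁ W₂ : Set (EuclideanSpace ℝ (Fin (n + 2))))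
    (h₁ : IsSphericalWulffShape n N W₁) (h₂ : IsSphericalWulffShape n N W₂) :
    spolar n (spolar n W₁ ∩ spolar n W₂) = sconv n (W₁ ∪ W₂) := by
  have hpos : ∀ P ∈ W₁ ∪ W₂, 0 < ⟪N, P⟫ := fun _ hP => hP.elim h₁.inner_pos h₂.inner_pos
  rw [spolar_inter_spolar]
  exact spolar_spolar_eq_sconv (h₁.isCompact.union h₂.isCompact) ⟨N, .inl (h₁.center_mem hN)⟩
    (zero_notMem_convexHull_of_inner_pos hpos)
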